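/- arXiv:1702.03277 — 2 statements merged into one kernel-verified Lean document; each statement's English description precedes it below -/
import Mathlib

section
/- Correctness of Earley's algorithm: let G = (𝔑, 𝔗, ℜ, 𝔖) be a context-free grammar, take the character alphabet Σ equal to 𝔗, and fix an input sequence D ∈ 𝔗*. Define the item sets 𝓘₀ = π₀(Init) and 𝓘ₖ = πₖ(𝓘ₖ₋₁) for k > 0, where πₖ(I) = limit (Scan k ∘ Complete k ∘ Predict k) I, and set 𝕴 = 𝓘_{|D|}. Then 𝔖 ⇒* D if and only if there exists α such that the item (𝔖 → α •, 0, |D|) ∈ 𝕴. -/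
namespace LL
section Defs

/-- A context-free grammar `(𝔑, 𝔗, ℜ, 𝔖)`: nonterminals are the type `N`,
terminals the type `T` (automatically disjoint), `rules ⊆ 𝔑 × (𝔑 ∪ 𝔗)*`,
and `start ∈ 𝔑`. -/
structure CFG (N T : Type*) where
  rules : Set (N × List (N ⊕ T))
  start : N

variable {N T C : Type*}

/-- One derivation step `α ⇒ β`. -/
def CFG.Step (G : CFG N T) (α β : List (N ⊕ T)) : Prop :=
  ∃ a A b γ, α = a ++ Sum.inl A :: b ∧ β = a ++ γ ++ b ∧ (A, γ) ∈ G.rules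

/-- `⇒*`, the reflexive transitive closure of `⇒`. -/
def CFG.Derives (G : CFG N T) : List (N ⊕ T) → List (N ⊕ T) → Prop :=
  Relation.ReflTransGen G.Step

/-- `ℒ = { w ∈ 𝔗* | 𝔖 ⇒* w }`. -/
def CFG.lang (G : CFG N T) : Set (List T) :=
  {w | G.Derives [Sum.inl G.start] (w.map Sum.inr)}

/-- `ℒ_prefix = { w ∈ 𝔗* | ∃ α. 𝔖 ⇒* w α }`. -/
def CFG.langPrefix (G : CFG N T) : Set (List T) :=
  {w | ∃ α, G.Derives [Sum.inl G.start] (w.map Sum.inr ++ α)}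

/-- A token is a pair `(t, c) ∈ 𝔗 × Σ*`. -/
abbrev Token (T C : Type*) := T × List C

/-- `p̄`, the characters of a token sequence. -/
def chars (p : List (Token T C)) : List C := (p.map Prod.snd).flatten

/-- `[p]`, the terminals of a token sequence. -/
def terms (p : List (Token T C)) : List T := p.map Prod.fst

/-- `limit f X = ⋃ n, fⁿ(X)`. -/
def limit {α : Type*} (f : Set α → Set α) (X : Set α) : Set α := ⋃ n, f^[n] X

/-- A local lexing `(Lex, Sel)` with respect to terminals `T` and characters `C`. -/
structure LocalLexing (T C : Type*) where
  Lex : T → List C → ℕ → Set (Token T C)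
  Sel : Set (Token T C) → Set (Token T C) → Set (Token T C)
  lex_sound : ∀ t D k, ∀ x ∈ Lex t D k,
      x.1 = t ∧ k + x.2.length ≤ D.length ∧ x.2 <+: D.drop k
  sel_sound : ∀ A B : Set (Token T C), A ⊆ B → A ⊆ Sel A B ∧ Sel A B ⊆ B

variable (G : CFG N T) (ll : LocalLexing T C) (D : List C)

/-- `𝒳ₖ = { x | x ∈ Lex([x])(D, k) }`. -/
def Xtok (k : ℕ) : Set (Token T C) := {x | x ∈ ll.Lex x.1 D k}

/-- `𝒲` of a path set `P` at position `k`: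
`{ x ∈ 𝒳ₖ | ∃ p ∈ P. |p̄| = k ∧ [p x] ∈ ℒ_prefix }`. -/
def Wtok (P : Set (List (Token T C))) (k : ℕ) : Set (Token T C) :=
  {x | x ∈ Xtok ll D k ∧ ∃ p ∈ P, (chars p).length = k ∧ terms (p ++ [x]) ∈ G.langPrefix}

/-- `Appendₖ T P = P ∪ { p t | p ∈ P ∧ |p̄| = k ∧ t ∈ T ∧ [p t] ∈ ℒ_prefix }`. -/
def Append (k : ℕ) (Ts : Set (Token T C)) (P : Set (List (Token T C))) :
    Set (List (Token T C)) :=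
  P ∪ {q | ∃ p ∈ P, ∃ t ∈ Ts, q = p ++ [t] ∧ (chars p).length = k ∧ terms q ∈ G.langPrefix}

/-- The pair `(𝒫ₖᵘ, 𝒵ₖᵘ)`, starting from the path set `P₀` at position `k`:
`𝒵ₖ⁰ = ∅`, `𝒵ₖᵘ⁺¹ = Sel(𝒵ₖᵘ, 𝒲ₖᵘ⁺¹)` and `𝒫ₖᵘ⁺¹ = limit (Appendₖ 𝒵ₖᵘ⁺¹) 𝒫ₖᵘ`. -/
def Pstage (k : ℕ) (P₀ : Set (List (Token T C))) :
    ℕ → Set (List (Token T C)) × Set (Token T C)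
  | 0 => (P₀, ∅)
  | u + 1 =>
      let PZ := Pstage k P₀ u
      let Z := ll.Sel PZ.2 (Wtok G ll D PZ.1 k)
      (limit (Append G k Z) PZ.1, Z)

/-- `𝒫ₖ⁰`:  `𝒫₀⁰ = {ε}` and `𝒫ₖ₊₁⁰ = 𝒫ₖ^∞`. -/
def Pinit : ℕ → Set (List (Token T C))
  | 0 => {[]}
  | k + 1 => ⋃ u, (Pstage G ll D k (Pinit k) u).1

/-- The path sets `𝒫ₖᵘ`. -/
def Pset (k u : ℕ) : Set (List (Token T C)) := (Pstage G ll D k (Pinit G ll D k) u).1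

/-- The selected token sets `𝒵ₖᵘ`. -/
def Zset (k u : ℕ) : Set (Token T C) := (Pstage G ll D k (Pinit G ll D k) u).2

/-- The admissible token sets `𝒲ₖᵘ`. -/
def Wset (k u : ℕ) : Set (Token T C) := Wtok G ll D (Pset G ll D k u) k

/-- `𝒵ₖ^∞ = ⋃ u, 𝒵ₖᵘ`. -/
def Zinf (k : ℕ) : Set (Token T C) := ⋃ u, Zset G ll D k u

/-- `𝕻 = 𝒫_{|D|}^∞`. -/
def PP : Set (List (Token T C)) := ⋃ u, Pset G ll D D.length u

/-- `ℓℓ(D) = { p ∈ 𝕻 | |p̄| = |D| ∧ [p] ∈ ℒ }`. -/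
def sem : Set (List (Token T C)) :=
  {p | p ∈ PP G ll D ∧ (chars p).length = D.length ∧ terms p ∈ G.lang}

/-- An Earley item `(lhs → pre • post, origin, bin)`. -/
structure EItem (N T : Type*) where
  lhs : N
  pre : List (N ⊕ T)
  post : List (N ⊕ T)
  origin : ℕ
  bin : ℕ

/-- `Init = { (𝔖 → • α, 0, 0) | (𝔖 → α) ∈ ℜ }`. -/
def EInit : Set (EItem N T) :=
  {x | ∃ α, (G.start, α) ∈ G.rules ∧ x = ⟨G.start, [], α, 0, 0⟩}

/-- The `Predict` operator. -/
def Predict (k : ℕ) (I : Set (EItem N T)) : Set (EItem N T) :=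
  I ∪ {x | ∃ M γ, (M, γ) ∈ G.rules ∧
        (∃ N' α β i, (⟨N', α, Sum.inl M :: β, i, k⟩ : EItem N T) ∈ I) ∧
        x = ⟨M, [], γ, k, k⟩}

/-- The `Complete` operator. -/
def Complete (k : ℕ) (I : Set (EItem N T)) : Set (EItem N T) :=
  I ∪ {x | ∃ N' α M β i j γ,
        (⟨N', α, Sum.inl M :: β, i, j⟩ : EItem N T) ∈ I ∧
        (⟨M, γ, [], j, k⟩ : EItem N T) ∈ I ∧
        x = ⟨N', α ++ [Sum.inl M], β, i, k⟩}

/-- The token-based `Scan` operator. -/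
def Scan (Ts : Set (Token T C)) (k : ℕ) (I : Set (EItem N T)) : Set (EItem N T) :=
  I ∪ {x | ∃ N' α X c β i, (X, c) ∈ Ts ∧
        (⟨N', α, Sum.inr X :: β, i, k⟩ : EItem N T) ∈ I ∧
        x = ⟨N', α ++ [Sum.inr X], β, i, k + c.length⟩}

/-- `Tokens T k I = Sel(T, { x | ∃ X N α β i. (N → α • X β, i, k) ∈ I ∧ x ∈ Lex(X)(D, k) })`. -/
def Tokens (Ts : Set (Token T C)) (k : ℕ) (I : Set (EItem N T)) : Set (Token T C) :=
  ll.Sel Ts {x | ∃ X N' α β i, (⟨N', α, Sum.inr X :: β, i, k⟩ : EItem N T) ∈ I ∧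
        x ∈ ll.Lex X D k}

/-- `πₖ T I = limit (Scan T k ∘ Complete k ∘ Predict k) I`. -/
def pik (Ts : Set (Token T C)) (k : ℕ) (I : Set (EItem N T)) : Set (EItem N T) :=
  limit (fun J => Scan Ts k (Complete k (Predict G k J))) I

/-- The pair `(𝔍ₖᵘ, 𝒯ₖᵘ)`, starting from the item set `J₀` at position `k`:
`𝒯ₖ⁰ = ∅`, `𝒯ₖᵘ⁺¹ = Tokens 𝒯ₖᵘ k 𝔍ₖᵘ` and `𝔍ₖᵘ⁺¹ = πₖ 𝒯ₖᵘ⁺¹ 𝔍ₖᵘ`. -/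
def Jstage (k : ℕ) (J₀ : Set (EItem N T)) : ℕ → Set (EItem N T) × Set (Token T C)
  | 0 => (J₀, ∅)
  | u + 1 =>
      let JT := Jstage k J₀ u
      let T' := Tokens ll D JT.2 k JT.1
      (pik G T' k JT.1, T')

/-- `𝔍ₖ⁰`:  `𝔍₀⁰ = π₀ ∅ Init` and `𝔍ₖ₊₁⁰ = πₖ₊₁ ∅ 𝓘ₖ`. -/
def Jinit : ℕ → Set (EItem N T)
  | 0 => pik G (∅ : Set (Token T C)) 0 (EInit G)
  | k + 1 => pik G (∅ : Set (Token T C)) (k + 1) (⋃ u, (Jstage G ll D k (Jinit k) u).1)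

/-- The item sets `𝔍ₖᵘ`. -/
def Jset (k u : ℕ) : Set (EItem N T) := (Jstage G ll D k (Jinit G ll D k) u).1

/-- The token sets `𝒯ₖᵘ`. -/
def Tset (k u : ℕ) : Set (Token T C) := (Jstage G ll D k (Jinit G ll D k) u).2

/-- `𝓘ₖ = ⋃ u, 𝔍ₖᵘ`. -/
def Ibin (k : ℕ) : Set (EItem N T) := ⋃ u, Jset G ll D k u

/-- `𝕴 = 𝓘_{|D|}`. -/
def Items : Set (EItem N T) := Ibin G ll D D.length

/-- An item `(N → α • β, i, j)` is `p`-valid. -/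
def pValid (p : List (Token T C)) (x : EItem N T) : Prop :=
  (x.lhs, x.pre ++ x.post) ∈ G.rules ∧
  ∃ u ≤ p.length, ∃ γ,
    (chars p).length = x.bin ∧
    (chars (p.take u)).length = x.origin ∧
    G.Derives [Sum.inl G.start] ((terms (p.take u)).map Sum.inr ++ Sum.inl x.lhs :: γ) ∧
    G.Derives x.pre ((terms (p.drop u)).map Sum.inr)

/-- `⟨P⟩ = { x | ∃ p ∈ P. x is p-valid }`. -/
def Gen (P : Set (List (Token T C))) : Set (EItem N T) :=
  {x | ∃ p ∈ P, pValid G p x}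

/-- The character-based `Scan` operator of classical Earley parsing (`Σ = 𝔗`):
`Scan k I = I ∪ {(N → α X • β, i, k+1) | k < |D| ∧ X = D_k ∧ (N → α • X β, i, k) ∈ I}`. -/
def ScanC {N T : Type*} (D : List T) (k : ℕ) (I : Set (EItem N T)) : Set (EItem N T) :=
  I ∪ {x | ∃ N' α X β i, D[k]? = some X ∧
        (⟨N', α, Sum.inr X :: β, i, k⟩ : EItem N T) ∈ I ∧
        x = ⟨N', α ++ [Sum.inr X], β, i, k + 1⟩}

/-- `πₖ I = limit (Scan k ∘ Complete k ∘ Predict k) I` for classical Earley parsing. -/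
def pikC {N T : Type*} (G : CFG N T) (D : List T) (k : ℕ) (I : Set (EItem N T)) :
    Set (EItem N T) :=
  limit (fun J => ScanC D k (Complete k (Predict G k J))) I

/-- The item sets `𝓘ₖ` of classical Earley parsing: `𝓘₀ = π₀ Init`, `𝓘ₖ = πₖ 𝓘ₖ₋₁`. -/
def IbinC {N T : Type*} (G : CFG N T) (D : List T) : ℕ → Set (EItem N T)
  | 0 => pikC G D 0 (EInit G)
  | k + 1 => pikC G D (k + 1) (IbinC G D k)

/-! ### Auxiliary material for the correctness proof -/

section EarleyProofAux

/-- Basic fact about `limit`: the seed is contained in the limit. -/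
private lemma subset_limit {α : Type*} (f : Set α → Set α) (X : Set α) : X ⊆ limit f X := by
  intro x hx
  exact Set.mem_iUnion.2 ⟨0, hx⟩

/-- If `S` is preserved by `f`, then the limit stays inside `S`. -/
private lemma limit_subset {α : Type*} {f : Set α → Set α} {X S : Set α}
    (hf : ∀ I, I ⊆ S → f I ⊆ S) (hX : X ⊆ S) : limit f X ⊆ S := by
  refine Set.iUnion_subset fun n => ?_
  induction n with
  | zero => simpa using hX
  | succ n ih => rw [Function.iterate_succ_apply']; exact hf _ ih

/-- If `f` is extensive and continuous on monotone chains, then `limit f X` is closed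
under `f`. -/
private lemma limit_closed {α : Type*} {f : Set α → Set α} {X : Set α}
    (hext : ∀ I, I ⊆ f I)
    (hcont : ∀ c : ℕ → Set α, Monotone c → f (⋃ n, c n) ⊆ ⋃ n, f (c n)) :
    f (limit f X) ⊆ limit f X := by
  have hchain : Monotone fun n => f^[n] X := by
    refine monotone_nat_of_le_succ fun n => ?_
    rw [Function.iterate_succ_apply']
    exact hext _
  intro x hx
  rcases Set.mem_iUnion.1 (hcont _ hchain hx) with ⟨n, hn⟩
  rw [← Function.iterate_succ_apply' f n X] at hn
  exact Set.mem_iUnion.2 ⟨n + 1, hn⟩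

private lemma predict_mono (k : ℕ) {I J : Set (EItem N T)} (h : I ⊆ J) :
    Predict G k I ⊆ Predict G k J := by
  intro x hx
  simp only [Predict, Set.mem_union, Set.mem_setOf_eq] at hx ⊢
  rcases hx with hx | ⟨M, γ, hr, ⟨N', α, β, i, hi⟩, rfl⟩
  · exact Or.inl (h hx)
  · exact Or.inr ⟨M, γ, hr, ⟨N', α, β, i, h hi⟩, rfl⟩

private lemma complete_mono (k : ℕ) {I J : Set (EItem N T)} (h : I ⊆ J) :
    Complete k I ⊆ Complete k J := by
  intro x hx
  simp only [Complete, Set.mem_union, Set.mem_setOf_eq] at hx ⊢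
  rcases hx with hx | ⟨N', α, M, β, i, j, γ, h1, h2, rfl⟩
  · exact Or.inl (h hx)
  · exact Or.inr ⟨N', α, M, β, i, j, γ, h h1, h h2, rfl⟩

private lemma scanC_mono (D : List T) (k : ℕ) {I J : Set (EItem N T)} (h : I ⊆ J) :
    ScanC D k I ⊆ ScanC D k J := by
  intro x hx
  simp only [ScanC, Set.mem_union, Set.mem_setOf_eq] at hx ⊢
  rcases hx with hx | ⟨N', α, X, β, i, hg, hi, rfl⟩
  · exact Or.inl (h hx)
  · exact Or.inr ⟨N', α, X, β, i, hg, h hi, rfl⟩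

private lemma predict_cont (k : ℕ) (c : ℕ → Set (EItem N T)) :
    Predict G k (⋃ n, c n) ⊆ ⋃ n, Predict G k (c n) := by
  intro x hx
  simp only [Predict, Set.mem_union, Set.mem_setOf_eq, Set.mem_iUnion] at hx ⊢
  rcases hx with ⟨n, hx⟩ | ⟨M, γ, hr, ⟨N', α, β, i, n, hi⟩, rfl⟩
  · exact ⟨n, Or.inl hx⟩
  · exact ⟨n, Or.inr ⟨M, γ, hr, ⟨N', α, β, i, hi⟩, rfl⟩⟩

private lemma complete_cont (k : ℕ) (c : ℕ → Set (EItem N T)) (hc : Monotone c) :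
    Complete k (⋃ n, c n) ⊆ ⋃ n, Complete k (c n) := by
  intro x hx
  simp only [Complete, Set.mem_union, Set.mem_setOf_eq, Set.mem_iUnion] at hx ⊢
  rcases hx with ⟨n, hx⟩ | ⟨N', α, M, β, i, j, γ, ⟨n1, h1⟩, ⟨n2, h2⟩, rfl⟩
  · exact ⟨n, Or.inl hx⟩
  · exact ⟨max n1 n2, Or.inr ⟨N', α, M, β, i, j, γ,
      hc (le_max_left n1 n2) h1, hc (le_max_right n1 n2) h2, rfl⟩⟩

private lemma scanC_cont (D : List T) (k : ℕ) (c : ℕ → Set (EItem N T)) :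
    ScanC D k (⋃ n, c n) ⊆ ⋃ n, ScanC D k (c n) := by
  intro x hx
  simp only [ScanC, Set.mem_union, Set.mem_setOf_eq, Set.mem_iUnion] at hx ⊢
  rcases hx with ⟨n, hx⟩ | ⟨N', α, X, β, i, hg, ⟨n, hi⟩, rfl⟩
  · exact ⟨n, Or.inl hx⟩
  · exact ⟨n, Or.inr ⟨N', α, X, β, i, hg, hi, rfl⟩⟩

private lemma stepC_ext (D : List T) (k : ℕ) (I : Set (EItem N T)) :
    I ⊆ ScanC D k (Complete k (Predict G k I)) :=
  (Set.subset_union_left.trans Set.subset_union_left).trans Set.subset_union_left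

private lemma pikC_closed (D : List T) (k : ℕ) (I : Set (EItem N T)) :
    ScanC D k (Complete k (Predict G k (pikC G D k I))) ⊆ pikC G D k I := by
  refine limit_closed (stepC_ext G D k) ?_
  intro c hc
  have h1 : Monotone fun n => Predict G k (c n) :=
    fun a b hab => predict_mono G k (hc hab)
  have h2 : Monotone fun n => Complete k (Predict G k (c n)) :=
    fun a b hab => complete_mono k (h1 hab)
  calc ScanC D k (Complete k (Predict G k (⋃ n, c n)))
      ⊆ ScanC D k (Complete k (⋃ n, Predict G k (c n))) :=
        scanC_mono D k (complete_mono k (predict_cont G k c))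
    _ ⊆ ScanC D k (⋃ n, Complete k (Predict G k (c n))) :=
        scanC_mono D k (complete_cont k _ h1)
    _ ⊆ ⋃ n, ScanC D k (Complete k (Predict G k (c n))) := scanC_cont D k _

private lemma IbinC_eq_pikC (D : List T) (k : ℕ) :
    ∃ I, IbinC G D k = pikC G D k I := by
  cases k with
  | zero => exact ⟨EInit G, rfl⟩
  | succ k => exact ⟨IbinC G D k, rfl⟩

private lemma IbinC_closed (D : List T) (k : ℕ) :
    ScanC D k (Complete k (Predict G k (IbinC G D k))) ⊆ IbinC G D k := by
  obtain ⟨I, hI⟩ := IbinC_eq_pikC G D k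
  rw [hI]
  exact pikC_closed G D k I

private lemma IbinC_predict (D : List T) (k : ℕ) :
    Predict G k (IbinC G D k) ⊆ IbinC G D k :=
  (Set.subset_union_left.trans Set.subset_union_left).trans (IbinC_closed G D k)

private lemma IbinC_complete (D : List T) (k : ℕ) :
    Complete k (IbinC G D k) ⊆ IbinC G D k :=
  ((complete_mono k Set.subset_union_left).trans Set.subset_union_left).trans
    (IbinC_closed G D k)

private lemma IbinC_scanC (D : List T) (k : ℕ) :
    ScanC D k (IbinC G D k) ⊆ IbinC G D k :=
  (scanC_mono D k (Set.subset_union_left.trans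
    (complete_mono k Set.subset_union_left))).trans (IbinC_closed G D k)

private lemma IbinC_mono (D : List T) {j k : ℕ} (h : j ≤ k) :
    IbinC G D j ⊆ IbinC G D k := by
  induction k, h using Nat.le_induction with
  | base => exact subset_rfl
  | succ k hk ih => exact ih.trans (subset_limit _ _)

private lemma EInit_subset_IbinC (D : List T) (k : ℕ) : EInit G ⊆ IbinC G D k :=
  (subset_limit _ _).trans (IbinC_mono G D (Nat.zero_le k))

/-! ### Derivation lemmas -/

private lemma derives_trans {a b c : List (N ⊕ T)} (h1 : G.Derives a b)
    (h2 : G.Derives b c) : G.Derives a c :=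
  Relation.ReflTransGen.trans h1 h2

private lemma derives_rule {A : N} {γ : List (N ⊕ T)} (h : (A, γ) ∈ G.rules) :
    G.Derives [Sum.inl A] γ :=
  Relation.ReflTransGen.single ⟨[], A, [], γ, rfl, by simp, h⟩

private lemma derives_append_left {a a' : List (N ⊕ T)} (b : List (N ⊕ T))
    (h : G.Derives a a') : G.Derives (a ++ b) (a' ++ b) := by
  induction h with
  | refl => exact Relation.ReflTransGen.refl
  | tail _ hstep ih =>
    refine ih.tail ?_
    obtain ⟨x, A, y, γ, rfl, rfl, hr⟩ := hstep
    exact ⟨x, A, y ++ b, γ, by simp, by simp, hr⟩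

private lemma derives_append_right (a : List (N ⊕ T)) {b b' : List (N ⊕ T)}
    (h : G.Derives b b') : G.Derives (a ++ b) (a ++ b') := by
  induction h with
  | refl => exact Relation.ReflTransGen.refl
  | tail _ hstep ih =>
    refine ih.tail ?_
    obtain ⟨x, A, y, γ, rfl, rfl, hr⟩ := hstep
    exact ⟨a ++ x, A, y, γ, by simp, by simp, hr⟩

private lemma derives_append {a a' b b' : List (N ⊕ T)} (h1 : G.Derives a a')
    (h2 : G.Derives b b') : G.Derives (a ++ b) (a' ++ b') :=
  derives_trans G (derives_append_left G b h1) (derives_append_right G a' h2)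

/-- Derivation trees, presented as a leftmost-style inductive predicate:
`DL G γ w` means the sentential form `γ` derives the word `w` of terminals. -/
private inductive DL (G : CFG N T) : List (N ⊕ T) → List T → Prop
  | nil : DL G [] []
  | term (t : T) {γ w} : DL G γ w → DL G (Sum.inr t :: γ) (t :: w)
  | nt {A δ γ w₁ w₂} : (A, δ) ∈ G.rules → DL G δ w₁ → DL G γ w₂ →
      DL G (Sum.inl A :: γ) (w₁ ++ w₂)

private lemma DL_refl (w : List T) : DL G (w.map Sum.inr) w := by
  induction w with
  | nil => exact DL.nil
  | cons t w ih => exact DL.term t ih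

private lemma DL_append {x y : List (N ⊕ T)} {w₁ w₂ : List T}
    (h1 : DL G x w₁) (h2 : DL G y w₂) : DL G (x ++ y) (w₁ ++ w₂) := by
  induction h1 with
  | nil => simpa using h2
  | term t _ ih => exact DL.term t ih
  | nt hr hδ _ _ ihγ =>
    rw [List.append_assoc]
    exact DL.nt hr hδ ihγ

private lemma DL_split : ∀ (x : List (N ⊕ T)) {y : List (N ⊕ T)} {w : List T},
    DL G (x ++ y) w → ∃ w₁ w₂, w = w₁ ++ w₂ ∧ DL G x w₁ ∧ DL G y w₂ := by
  intro x
  induction x with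
  | nil =>
    intro y w h
    exact ⟨[], w, rfl, DL.nil, h⟩
  | cons s x ih =>
    intro y w h
    cases h with
    | term t h' =>
      obtain ⟨w₁, w₂, rfl, h1, h2⟩ := ih h'
      exact ⟨t :: w₁, w₂, rfl, DL.term t h1, h2⟩
    | nt hr hδ h' =>
      obtain ⟨w₂a, w₂b, rfl, h1, h2⟩ := ih h'
      exact ⟨_ ++ w₂a, w₂b, by rw [List.append_assoc], DL.nt hr hδ h1, h2⟩

private lemma derives_DL {γ : List (N ⊕ T)} {w : List T}
    (h : G.Derives γ (w.map Sum.inr)) : DL G γ w := by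
  induction h using Relation.ReflTransGen.head_induction_on with
  | refl => exact DL_refl G w
  | head hstep _ ih =>
    obtain ⟨a, A, b, δ, rfl, rfl, hr⟩ := hstep
    rw [List.append_assoc] at ih
    obtain ⟨wa, ws, rfl, ha, hs⟩ := DL_split G a ih
    obtain ⟨wδ, wb, rfl, hδ, hb⟩ := DL_split G δ hs
    exact DL_append G ha (DL.nt hr hδ hb)

/-! ### Soundness -/

/-- The soundness invariant for Earley items. -/
private def SoundItem (D : List T) (x : EItem N T) : Prop :=
  (x.lhs, x.pre ++ x.post) ∈ G.rules ∧ x.origin ≤ x.bin ∧ x.bin ≤ D.length ∧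
    G.Derives x.pre (((D.take x.bin).drop x.origin).map Sum.inr)

private lemma slice_nil (D : List T) (k : ℕ) : (D.take k).drop k = [] := by
  apply List.drop_eq_nil_of_le
  simp

private lemma slice_append (D : List T) {i j k : ℕ} (hij : i ≤ j) (hjk : j ≤ k)
    (hj : j ≤ D.length) :
    (D.take j).drop i ++ (D.take k).drop j = (D.take k).drop i := by
  have h1 : (D.take k).take j = D.take j := by
    rw [List.take_take, Nat.min_eq_left hjk]
  have h2 : i ≤ ((D.take k).take j).length := by
    rw [h1, List.length_take]
    exact le_min hij (hij.trans hj)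
  calc (D.take j).drop i ++ (D.take k).drop j
      = ((D.take k).take j).drop i ++ (D.take k).drop j := by rw [h1]
    _ = (((D.take k).take j) ++ (D.take k).drop j).drop i :=
        (List.drop_append_of_le_length h2).symm
    _ = (D.take k).drop i := by rw [List.take_append_drop]

private lemma slice_scan (D : List T) {i k : ℕ} {X : T} (hik : i ≤ k)
    (hX : D[k]? = some X) :
    (D.take k).drop i ++ [X] = (D.take (k + 1)).drop i := by
  have hk : k < D.length := by
    by_contra hk
    rw [List.getElem?_eq_none (by omega)] at hX
    cases hX
  have h2 : i ≤ (D.take k).length := by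
    rw [List.length_take]; exact le_min hik (hik.trans hk.le)
  rw [List.take_succ, hX]
  rw [List.drop_append_of_le_length h2]
  rfl

private lemma sound_stepC (D : List T) (k : ℕ) {I : Set (EItem N T)}
    (hI : ∀ x ∈ I, SoundItem G D x) :
    ∀ x ∈ ScanC D k (Complete k (Predict G k I)), SoundItem G D x := by
  -- Predict preserves soundness
  have hP : ∀ x ∈ Predict G k I, SoundItem G D x := by
    intro x hx
    simp only [Predict, Set.mem_union, Set.mem_setOf_eq] at hx
    rcases hx with hx | ⟨M, γ, hr, ⟨N', α, β, i, hi⟩, rfl⟩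
    · exact hI x hx
    · obtain ⟨_, _, hb, _⟩ := hI _ hi
      dsimp only [SoundItem] at hb ⊢
      exact ⟨by simpa using hr, le_refl k, hb, by rw [slice_nil]; exact Relation.ReflTransGen.refl⟩
  -- Complete preserves soundness
  have hC : ∀ x ∈ Complete k (Predict G k I), SoundItem G D x := by
    intro x hx
    simp only [Complete, Set.mem_union, Set.mem_setOf_eq] at hx
    rcases hx with hx | ⟨N', α, M, β, i, j, γ, h1, h2, rfl⟩
    · exact hP x hx
    · obtain ⟨hr1, hij, hj, hd1⟩ := hP _ h1
      obtain ⟨hr2, hjk, hk, hd2⟩ := hP _ h2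
      dsimp only [SoundItem] at hr1 hij hj hd1 hr2 hjk hk hd2 ⊢
      refine ⟨by simpa [List.append_assoc] using hr1, hij.trans hjk, hk, ?_⟩
      have hM : G.Derives [Sum.inl M] (((D.take k).drop j).map Sum.inr) :=
        derives_trans G (derives_rule G (by simpa using hr2)) hd2
      have := derives_append G hd1 hM
      rwa [← List.map_append, slice_append D hij hjk hj] at this
  -- Scan preserves soundness
  intro x hx
  simp only [ScanC, Set.mem_union, Set.mem_setOf_eq] at hx
  rcases hx with hx | ⟨N', α, X, β, i, hg, hi, rfl⟩
  · exact hC x hx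
  · obtain ⟨hr1, hik, hk, hd1⟩ := hC _ hi
    dsimp only [SoundItem] at hr1 hik hk hd1 ⊢
    have hklt : k < D.length := by
      by_contra hc
      rw [List.getElem?_eq_none (by omega)] at hg
      cases hg
    refine ⟨by simpa [List.append_assoc] using hr1, by omega, by omega, ?_⟩
    have hX : G.Derives [Sum.inr X] [Sum.inr X] := Relation.ReflTransGen.refl
    have := derives_append G hd1 hX
    rwa [show ([Sum.inr X] : List (N ⊕ T)) = List.map Sum.inr [X] from rfl,
      ← List.map_append, slice_scan D hik hg] at this

private lemma IbinC_sound (D : List T) (k : ℕ) :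
    ∀ x ∈ IbinC G D k, SoundItem G D x := by
  induction k with
  | zero =>
    refine limit_subset (fun I hI => sound_stepC G D 0 hI) ?_
    rintro x ⟨α, hr, rfl⟩
    exact ⟨hr, le_refl 0, Nat.zero_le _, by simp; exact Relation.ReflTransGen.refl⟩
  | succ k ih =>
    exact limit_subset (fun I hI => sound_stepC G D (k + 1) hI) ih

/-! ### Completeness -/

private lemma earley_complete_aux (D : List T) {γ : List (N ⊕ T)} {w : List T}
    (h : DL G γ w) :
    ∀ B δ i j, (⟨B, δ, γ, i, j⟩ : EItem N T) ∈ IbinC G D j →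
      w <+: D.drop j → j + w.length ≤ D.length →
      (⟨B, δ ++ γ, [], i, j + w.length⟩ : EItem N T) ∈ IbinC G D (j + w.length) := by
  induction h with
  | nil =>
    intro B δ i j hmem _ _
    simpa using hmem
  | @term t γ w _ ih =>
    intro B δ i j hmem hpre hlen
    obtain ⟨r, hr⟩ := hpre
    have hget : D[j]? = some t := by
      have : (D.drop j)[0]? = some t := by rw [← hr]; simp
      rwa [List.getElem?_drop, Nat.add_zero] at this
    have hscan : (⟨B, δ ++ [Sum.inr t], γ, i, j + 1⟩ : EItem N T) ∈ IbinC G D j := by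
      apply IbinC_scanC G D j
      exact Set.mem_union_right _ ⟨B, δ, t, γ, i, hget, hmem, rfl⟩
    have hmem' : (⟨B, δ ++ [Sum.inr t], γ, i, j + 1⟩ : EItem N T) ∈ IbinC G D (j + 1) :=
      IbinC_mono G D (Nat.le_succ j) hscan
    have hpre' : w <+: D.drop (j + 1) := by
      refine ⟨r, ?_⟩
      rw [← List.drop_drop, ← hr]
      simp
    have := ih B (δ ++ [Sum.inr t]) i (j + 1) hmem' hpre' (by simp at hlen ⊢; omega)
    have heq : j + (t :: w).length = j + 1 + w.length := by simp; omega
    rw [heq]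
    simpa [List.append_assoc] using this
  | @nt A δA γ w₁ w₂ hrule _ _ ih1 ih2 =>
    intro B δ i j hmem hpre hlen
    obtain ⟨r, hr⟩ := hpre
    rw [List.append_assoc] at hr
    -- hr : w₁ ++ (w₂ ++ r) = D.drop j
    -- Predict
    have hpred : (⟨A, [], δA, j, j⟩ : EItem N T) ∈ IbinC G D j := by
      apply IbinC_predict G D j
      exact Set.mem_union_right _ ⟨A, δA, hrule, ⟨B, δ, γ, i, hmem⟩, rfl⟩
    have hlen' : (w₁ ++ w₂).length = w₁.length + w₂.length := List.length_append
    have h1 := ih1 A [] j j hpred ⟨w₂ ++ r, hr⟩ (by rw [hlen'] at hlen; omega)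
    rw [List.nil_append] at h1
    -- Complete
    have hcomp : (⟨B, δ ++ [Sum.inl A], γ, i, j + w₁.length⟩ : EItem N T)
        ∈ IbinC G D (j + w₁.length) := by
      apply IbinC_complete G D (j + w₁.length)
      refine Set.mem_union_right _ ⟨B, δ, A, γ, i, j, δA,
        IbinC_mono G D (Nat.le_add_right j w₁.length) hmem, h1, rfl⟩
    -- second part
    have hpre2 : w₂ <+: D.drop (j + w₁.length) := by
      refine ⟨r, ?_⟩
      rw [← List.drop_drop, ← hr, List.drop_left]
    have h2 := ih2 B (δ ++ [Sum.inl A]) i (j + w₁.length) hcomp hpre2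
      (by rw [hlen'] at hlen; omega)
    have heq : j + (w₁ ++ w₂).length = j + w₁.length + w₂.length := by
      rw [hlen']; omega
    rw [heq]
    simpa [List.append_assoc] using h2

end EarleyProofAux

/-- Correctness of Earley's algorithm: `𝔖 ⇒* D` iff `(𝔖 → α •, 0, |D|) ∈ 𝕴 = 𝓘_{|D|}`
for some `α`. -/
theorem earley_correctness {N T : Type*} (G : CFG N T) (D : List T) :
    G.Derives [Sum.inl G.start] (D.map Sum.inr) ↔
      ∃ α, (⟨G.start, α, [], 0, D.length⟩ : EItem N T) ∈ IbinC G D D.length := by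
  constructor
  · intro h
    have hDL := derives_DL G h
    cases hDL with
    | nt hrule hδ hγ =>
      rename_i δ w₁ w₂
      cases hγ
      -- now the goal mentions `w₁ ++ []`
      have h0 : (⟨G.start, [], δ, 0, 0⟩ : EItem N T) ∈ IbinC G (w₁ ++ []) 0 :=
        EInit_subset_IbinC G (w₁ ++ []) 0 ⟨δ, hrule, rfl⟩
      have := earley_complete_aux G (w₁ ++ []) hδ G.start [] 0 0 h0
        (by simp) (by simp)
      refine ⟨δ, ?_⟩
      simpa using this
  · rintro ⟨α, hα⟩
    obtain ⟨hr, -, -, hd⟩ := IbinC_sound G D D.length _ hα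
    dsimp only [SoundItem] at hr hd
    rw [List.append_nil] at hr
    rw [List.drop_zero, List.take_length] at hd
    exact derives_trans G (derives_rule G hr) hd

end Defs
end LL
end

section
/- No-empty-token simplification for path sets: in the local lexing semantics, for any position k, if the selected token set 𝒵ₖ¹ contains no empty tokens (no tokens (t, c) with |c| = 0), then the limit construction collapses after one application: 𝒫ₖ¹ = Appendₖ (𝒵ₖ¹) (𝒫ₖ⁰), and every path q ∈ 𝒫ₖ¹ \ 𝒫ₖ⁰ satisfies |q̄| > k. -/
namespace LL
section Defs

variable {N T C : Type*}

variable (G : CFG N T) (ll : LocalLexing T C) (D : List C)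

theorem limit_eq_apply_of_apply_apply_eq {α : Type*} {f : Set α → Set α} {X : Set α}
    (hX : X ⊆ f X) (hf : f (f X) = f X) : limit f X = f X := by
  have iterate_succ : ∀ n, f^[n + 1] X = f X := by
    intro n
    induction n with
    | zero => rfl
    | succ n ih => rw [Function.iterate_succ_apply', ih, hf]
  refine Set.Subset.antisymm (Set.iUnion_subset fun n => ?_) (Set.subset_iUnion_of_subset 1 le_rfl)
  cases n with
  | zero => exact hX
  | succ n => exact (iterate_succ n).le

theorem chars_append_singleton (p : List (Token T C)) (t : Token T C) :
    chars (p ++ [t]) = chars p ++ t.2 := by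
  simp [chars]

theorem subset_Append (k : ℕ) (Ts : Set (Token T C)) (P : Set (List (Token T C))) :
    P ⊆ Append G k Ts P :=
  Set.subset_union_left

section NonemptyTokens

variable {G} {k : ℕ} {Ts : Set (Token T C)}

theorem lt_length_chars_of_mem_Append_diff (hTs : ∀ t ∈ Ts, t.2 ≠ [])
    {P : Set (List (Token T C))} {q : List (Token T C)} (hq : q ∈ Append G k Ts P \ P) :
    k < (chars q).length := by
  obtain ⟨hq | ⟨p, -, t, ht, rfl, hp, -⟩, hqP⟩ := hq
  · exact absurd hq hqP
  · rw [chars_append_singleton, List.length_append, hp]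
    have := List.length_pos_iff.mpr (hTs t ht)
    omega

/-- A path newly appended with a nonempty token ends beyond position `k`, so `Appendₖ` cannot
extend it again. -/
theorem Append_Append_of_ne_nil (hTs : ∀ t ∈ Ts, t.2 ≠ []) (P : Set (List (Token T C))) :
    Append G k Ts (Append G k Ts P) = Append G k Ts P := by
  refine Set.Subset.antisymm ?_ (subset_Append G k Ts _)
  rintro q (hq | ⟨p, hp, t, ht, rfl, hpk, hpre⟩)
  · exact hq
  · by_cases hpP : p ∈ P
    · exact Or.inr ⟨p, hpP, t, ht, rfl, hpk, hpre⟩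
    · exact absurd hpk (lt_length_chars_of_mem_Append_diff hTs ⟨hp, hpP⟩).ne'

end NonemptyTokens

theorem no_empty_tokens_paths_general {N T C : Type*} (G : CFG N T) (ll : LocalLexing T C)
    (D : List C) (k : ℕ)
    (h : ∀ x ∈ Zset G ll D k 1, x.2 ≠ ([] : List C)) :
    Pset G ll D k 1 = Append G k (Zset G ll D k 1) (Pset G ll D k 0) ∧
    ∀ q ∈ Pset G ll D k 1 \ Pset G ll D k 0, k < (chars q).length := by
  have hP₁ : Pset G ll D k 1 = Append G k (Zset G ll D k 1) (Pset G ll D k 0) :=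
    limit_eq_apply_of_apply_apply_eq (subset_Append G k _ _) (Append_Append_of_ne_nil h _)
  exact ⟨hP₁, fun q hq => lt_length_chars_of_mem_Append_diff h (hP₁ ▸ hq)⟩

/-- No-empty-token simplification for path sets: if `𝒵ₖ¹` contains no empty tokens then
`𝒫ₖ¹ = Appendₖ 𝒵ₖ¹ 𝒫ₖ⁰`, and every `q ∈ 𝒫ₖ¹ \ 𝒫ₖ⁰` satisfies `|q̄| > k`. -/
theorem no_empty_tokens_paths {N T C : Type*} (G : CFG N T) (ll : LocalLexing T C)
    (D : List C) (k : ℕ) (hk : k ≤ D.length)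
    (h : ∀ x ∈ Zset G ll D k 1, x.2 ≠ ([] : List C)) :
    Pset G ll D k 1 = Append G k (Zset G ll D k 1) (Pset G ll D k 0) ∧
    ∀ q ∈ Pset G ll D k 1 \ Pset G ll D k 0, k < (chars q).length :=
  no_empty_tokens_paths_general G ll D k h

end Defs
end LL
end
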